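/- arXiv:2210.09703 — 2 statements merged into one kernel-verified Lean document; each statement's English description precedes it below -/
import Mathlib

section
/- Let W be a regular reachability or safety objective over C and M a chromatic memory structure. If M suffices to play optimally for W in all finite one-player arenas of Player 1, then W is M-strongly-monotone. -/
set_option autoImplicit false

namespace RegularMemory

/-- Concatenation of a finite word with an infinite word. -/
def wcat {C : Type} (w : List C) (x : ℕ → C) : ℕ → C := fun n =>
  if h : n < w.length then w.get ⟨n, h⟩ else x (n - w.length)

/-- The infinite word `w^ω` (junk value if `w` is empty). -/
noncomputable def wpow {C : Type} [Nonempty C] : List C → ℕ → C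
  | [] => fun _ => Classical.arbitrary C
  | (a :: l) => fun n => (a :: l).get ⟨n % (a :: l).length, Nat.mod_lt n (Nat.succ_pos _)⟩

/-- Winning continuations `w⁻¹W` of the finite word `w` for the objective `W`. -/
def contAfter {C : Type} (W : Set (ℕ → C)) (w : List C) : Set (ℕ → C) :=
  {x | wcat w x ∈ W}

/-- Prefix preorder `w₁ ⪯_W w₂`. -/
def prefLe {C : Type} (W : Set (ℕ → C)) (w₁ w₂ : List C) : Prop :=
  contAfter W w₁ ⊆ contAfter W w₂

/-- Strict prefix relation `w₁ ≺_W w₂`. -/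
def prefLt {C : Type} (W : Set (ℕ → C)) (w₁ w₂ : List C) : Prop :=
  prefLe W w₁ w₂ ∧ ¬ prefLe W w₂ w₁

/-- Comparability for the prefix preorder. -/
def PrefComparable {C : Type} (W : Set (ℕ → C)) (w₁ w₂ : List C) : Prop :=
  prefLe W w₁ w₂ ∨ prefLe W w₂ w₁

/-- The general reachability objective derived from `A`: infinite words with a prefix in `A`. -/
def ReachObj {C : Type} (A : Set (List C)) : Set (ℕ → C) :=
  {x | ∃ n : ℕ, (List.ofFn fun i : Fin n => x i) ∈ A}

/-- The general safety objective derived from `A`. -/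
def SafeObj {C : Type} (A : Set (List C)) : Set (ℕ → C) :=
  (ReachObj A)ᶜ

/-- The prefix preorder of `W` has finitely many equivalence classes. -/
def FinClasses {C : Type} (W : Set (ℕ → C)) : Prop :=
  (Set.range fun w : List C => contAfter W w).Finite

/-- The prefix preorder of `W` is well-founded:
every nonempty chain contains a minimal element. -/
def PrefWellFounded {C : Type} (W : Set (ℕ → C)) : Prop :=
  ∀ S : Set (List C), S.Nonempty →
    (∀ w₁ ∈ S, ∀ w₂ ∈ S, PrefComparable W w₁ w₂) →
    ∃ w₀ ∈ S, ∀ w ∈ S, ¬ prefLt W w w₀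

/-- Chromatic memory structure. -/
structure MemStruct (C : Type) where
  M : Type
  init : M
  upd : M → C → M

/-- Extension of the update function to finite words. -/
def MemStruct.updStar {C : Type} (N : MemStruct C) (m : N.M) (w : List C) : N.M :=
  w.foldl N.upd m

/-- The trivial one-state memory structure. -/
def trivMem (C : Type) : MemStruct C :=
  ⟨Unit, (), fun _ _ => ()⟩

/-- `W` is `N`-strongly-monotone. -/
def StronglyMonotone {C : Type} (N : MemStruct C) (W : Set (ℕ → C)) : Prop :=
  ∀ w₁ w₂ : List C,
    N.updStar N.init w₁ = N.updStar N.init w₂ → PrefComparable W w₁ w₂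

/-- `W` is `N`-progress-consistent. -/
def ProgressConsistent {C : Type} [Nonempty C] (N : MemStruct C) (W : Set (ℕ → C)) : Prop :=
  ∀ (m : N.M) (w₁ w₂ : List C),
    N.updStar N.init w₁ = m → N.updStar m w₂ = m →
    prefLt W w₁ (w₁ ++ w₂) → wcat w₁ (wpow w₂) ∈ W

/-- Two-player arena with colored edges; Player-1 vertices have outgoing edges
(so that strategies of Player 1 exist). -/
structure Arena (C : Type) where
  V : Type
  P1 : V → Prop
  E : Set (V × C × V)
  succ : ∀ v : V, P1 v → ∃ e ∈ E, e.1 = v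

namespace Arena

/-- Valid histories starting at a given vertex. -/
def HistFrom {C : Type} (A : Arena C) : A.V → List (A.V × C × A.V) → Prop
  | _, [] => True
  | v, e :: l => e ∈ A.E ∧ e.1 = v ∧ HistFrom A e.2.2 l

/-- Endpoint of a history. -/
def endFrom {C : Type} (A : Arena C) : A.V → List (A.V × C × A.V) → A.V
  | v, [] => v
  | _, e :: l => endFrom A e.2.2 l

/-- Infinite plays from a vertex. -/
def PlayFrom {C : Type} (A : Arena C) (v : A.V) (π : ℕ → A.V × C × A.V) : Prop :=
  (π 0).1 = v ∧ ∀ n : ℕ, π n ∈ A.E ∧ (π n).2.2 = (π (n + 1)).1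

/-- Colors along a play. -/
def playCol {C V : Type} (π : ℕ → V × C × V) : ℕ → C :=
  fun n => (π n).2.1

/-- Strategies of Player 1: on every valid history ending in a Player-1 vertex,
the strategy picks an edge leaving that vertex. -/
structure Strategy {C : Type} (A : Arena C) where
  next : A.V → List (A.V × C × A.V) → A.V × C × A.V
  legal : ∀ (v : A.V) (l : List (A.V × C × A.V)),
    A.HistFrom v l → A.P1 (A.endFrom v l) →
      next v l ∈ A.E ∧ (next v l).1 = A.endFrom v l

/-- A play from `v` is consistent with the strategy `σ`. -/
def Strategy.Consistent {C : Type} {A : Arena C} (σ : A.Strategy) (v : A.V)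
    (π : ℕ → A.V × C × A.V) : Prop :=
  ∀ n : ℕ, A.P1 (A.endFrom v (List.ofFn fun i : Fin n => π i)) →
    π n = σ.next v (List.ofFn fun i : Fin n => π i)

/-- `σ` is winning from `v` for the objective `W`. -/
def Strategy.WinningFrom {C : Type} {A : Arena C} (σ : A.Strategy)
    (W : Set (ℕ → C)) (v : A.V) : Prop :=
  ∀ π : ℕ → A.V × C × A.V, A.PlayFrom v π → σ.Consistent v π → playCol π ∈ W

/-- `σ` is optimal in `(A, W)`: winning from every vertex from which
Player 1 has some winning strategy. -/
def Strategy.Optimal {C : Type} {A : Arena C} (σ : A.Strategy) (W : Set (ℕ → C)) : Prop :=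
  ∀ v : A.V, (∃ σ' : A.Strategy, σ'.WinningFrom W v) → σ.WinningFrom W v

/-- `σ` is based on the memory structure `N`. -/
def Strategy.BasedOn {C : Type} {A : Arena C} (σ : A.Strategy) (N : MemStruct C) : Prop :=
  ∃ nxt : A.V → N.M → A.V × C × A.V,
    ∀ (v : A.V) (l : List (A.V × C × A.V)),
      A.HistFrom v l → A.P1 (A.endFrom v l) →
        σ.next v l = nxt (A.endFrom v l) (N.updStar N.init (l.map fun e => e.2.1))

/-- Finite arena: finitely many vertices and edges. -/
def IsFinite {C : Type} (A : Arena C) : Prop := Finite A.V ∧ A.E.Finite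

/-- Finitely branching arena. -/
def FinBranching {C : Type} (A : Arena C) : Prop :=
  ∀ v : A.V, {e ∈ A.E | e.1 = v}.Finite

/-- One-player arena of Player 1. -/
def OneP1 {C : Type} (A : Arena C) : Prop := ∀ v : A.V, A.P1 v

end Arena

/-- `N` suffices to play optimally for `W` in all arenas of the class `P`. -/
def SufficesIn {C : Type} (N : MemStruct C) (W : Set (ℕ → C))
    (P : Arena C → Prop) : Prop :=
  ∀ A : Arena C, P A → ∃ σ : A.Strategy, σ.BasedOn N ∧ σ.Optimal W

/-- Deterministic automaton (with complete transition function). -/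
structure DetAuto (C : Type) where
  Q : Type
  init : Q
  δ : Q → C → Q
  F : Set Q

/-- Extension of the transition function to finite words. -/
def DetAuto.δStar {C : Type} (D : DetAuto C) (q : D.Q) (w : List C) : D.Q :=
  w.foldl D.δ q

/-- Language recognized by `D`. -/
def DetAuto.lang {C : Type} (D : DetAuto C) : Set (List C) :=
  {w | D.δStar D.init w ∈ D.F}

/-- Prefix preorder extended to automaton states. -/
def statePrefLe {C : Type} (D : DetAuto C) (W : Set (ℕ → C)) (q₁ q₂ : D.Q) : Prop :=
  ∀ w₁ w₂ : List C,
    D.δStar D.init w₁ = q₁ → D.δStar D.init w₂ = q₂ → prefLe W w₁ w₂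

def statePrefLt {C : Type} (D : DetAuto C) (W : Set (ℕ → C)) (q₁ q₂ : D.Q) : Prop :=
  statePrefLe D W q₁ q₂ ∧ ¬ statePrefLe D W q₂ q₁

def StateComparable {C : Type} (D : DetAuto C) (W : Set (ℕ → C)) (q₁ q₂ : D.Q) : Prop :=
  statePrefLe D W q₁ q₂ ∨ statePrefLe D W q₂ q₁

/-- Monotone decomposition of `D` with `k` sets. -/
def MonotoneDecomposition {C : Type} (D : DetAuto C) (W : Set (ℕ → C))
    {k : ℕ} (Γ : Fin k → Set D.Q) : Prop :=
  (∀ q : D.Q, ∃ i : Fin k, q ∈ Γ i) ∧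
  (∀ (c : C) (i : Fin k), ∃ j : Fin k, (fun q => D.δ q c) '' Γ i ⊆ Γ j) ∧
  (∀ i : Fin k, ∀ q₁ ∈ Γ i, ∀ q₂ ∈ Γ i, StateComparable D W q₁ q₂)

end RegularMemory

/-!
Suppose `w₁` and `w₂` lead to the same memory state but are incomparable, witnessed by
`x₁ ∈ w₁⁻¹W \ w₂⁻¹W` and `x₂ ∈ w₂⁻¹W \ w₁⁻¹W`.

First the `xᵢ` are made ultimately periodic. For a reachability objective, `x` wins after `u`
iff some `u x₀ ⋯ x_{k-1}` has all continuations winning. Take such a `k` for `x = x₁` after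
`w₁`. As there are finitely many classes, the class of `w₂ x₀ ⋯ x_{n-1}` is the same for some
`n = i` and `n = j` with `k ≤ i < j`. Then `x₀ ⋯ x_{i-1} (x_i ⋯ x_{j-1})^ω` still wins after `w₁`,
and the classes of `w₂` followed by its prefixes are among those of `w₂ x₀ ⋯ x_{n-1}`, so it
still loses after `w₂`. Safety objectives are complements of reachability objectives.

In the finite one-player arena where chains reading `w₁` and `w₂` merge in a hub from which
lassos read `x₁` and `x₂`, Player 1 wins from the start of both chains. A strategy based on the
memory takes the same lasso after `w₁` and after `w₂`, so one `xᵢ` is winning after both words.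
-/

namespace RegularMemory

section

variable {C : Type}

section Words

variable {α : Type*}

def pref (x : ℕ → α) (n : ℕ) : List α := List.ofFn fun i : Fin n => x i

@[simp] lemma length_pref (x : ℕ → α) (n : ℕ) : (pref x n).length = n := by simp [pref]

@[simp] lemma getElem_pref (x : ℕ → α) {n i : ℕ} (h : i < (pref x n).length) :
    (pref x n)[i] = x i := by simp [pref]

lemma pref_succ (x : ℕ → α) (n : ℕ) : pref x (n + 1) = pref x n ++ [x n] := by
  rw [pref, List.ofFn_succ', List.concat_eq_append]
  rfl

lemma take_pref (x : ℕ → α) {m n : ℕ} (h : n ≤ m) : (pref x m).take n = pref x n :=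
  List.ext_getElem (by simp [h]) fun i _ _ => by simp

lemma map_pref {β : Type*} (f : α → β) (x : ℕ → α) (n : ℕ) :
    (pref x n).map f = pref (f ∘ x) n := List.map_ofFn

lemma wcat_of_lt (w : List C) (x : ℕ → C) {n : ℕ} (h : n < w.length) : wcat w x n = w[n] :=
  dif_pos h

lemma wcat_length_add (w : List C) (x : ℕ → C) (n : ℕ) : wcat w x (w.length + n) = x n := by
  rw [wcat, dif_neg (by omega), Nat.add_sub_cancel_left]

lemma wcat_of_le (w : List C) (x : ℕ → C) {n : ℕ} (h : w.length ≤ n) :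
    wcat w x n = x (n - w.length) := by
  obtain ⟨k, rfl⟩ := Nat.exists_eq_add_of_le h
  rw [wcat_length_add, Nat.add_sub_cancel_left]

lemma pref_wcat (u : List C) (z : ℕ → C) (n : ℕ) :
    pref (wcat u z) (u.length + n) = u ++ pref z n := by
  refine List.ext_getElem (by simp) fun i h _ => ?_
  rw [getElem_pref]
  rcases lt_or_ge i u.length with hi | hi
  · rw [wcat_of_lt _ _ hi, List.getElem_append_left hi]
  · rw [wcat_of_le _ _ hi, List.getElem_append_right hi, getElem_pref]

lemma pref_wcat_length (u : List C) (z : ℕ → C) : pref (wcat u z) u.length = u := by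
  simpa [pref] using pref_wcat u z 0

lemma wcat_append (u v : List C) (x : ℕ → C) : wcat (u ++ v) x = wcat u (wcat v x) := by
  funext n
  rcases lt_or_ge n u.length with h | h
  · rw [wcat_of_lt _ _ (by simp; omega), wcat_of_lt _ _ h, List.getElem_append_left h]
  obtain ⟨k, rfl⟩ := Nat.exists_eq_add_of_le h
  rw [wcat_length_add]
  rcases lt_or_ge k v.length with h' | h'
  · rw [wcat_of_lt _ _ (by simp; omega), wcat_of_lt _ _ h', List.getElem_append_right (by omega)]
    simp
  · rw [wcat_of_le _ _ (by simp; omega), wcat_of_le _ _ h', List.length_append]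
    congr 1
    omega

lemma wcat_pref_shift (x : ℕ → C) (k : ℕ) : wcat (pref x k) (fun n => x (k + n)) = x := by
  funext n
  rcases lt_or_ge n k with h | h
  · rw [wcat_of_lt _ _ (by simpa using h), getElem_pref]
  · rw [wcat_of_le _ _ (by simpa using h), length_pref, Nat.add_sub_cancel' h]

end Words

section Continuations

variable {W : Set (ℕ → C)} {u : List C}

lemma shift_mem_contAfter_append_pref {x : ℕ → C} (k : ℕ) :
    (fun n => x (k + n)) ∈ contAfter W (u ++ pref x k) ↔ x ∈ contAfter W u := by
  simp only [contAfter, Set.mem_ofPred_eq, wcat_append, wcat_pref_shift]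

lemma contAfter_append_congr {u' : List C} (h : contAfter W u = contAfter W u') (v : List C) :
    contAfter W (u ++ v) = contAfter W (u' ++ v) := by
  ext y
  simp only [contAfter, Set.mem_ofPred_eq, wcat_append] at h ⊢
  exact Set.ext_iff.1 h _

lemma contAfter_compl : contAfter Wᶜ u = (contAfter W u)ᶜ := rfl

lemma FinClasses.compl (h : FinClasses W) : FinClasses Wᶜ := by
  simpa only [FinClasses, contAfter_compl, Set.range_comp'] using h.image Compl.compl

end Continuations

section Reach

variable {A : Set (List C)} {u : List C}

lemma contAfter_reachObj_eq_univ {z : ℕ → C} {n : ℕ} (h : pref (wcat u z) n ∈ A) :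
    contAfter (ReachObj A) (u ++ pref z n) = Set.univ := by
  refine Set.eq_univ_of_forall fun y => ⟨n, ?_⟩
  change pref _ n ∈ A
  rwa [← take_pref _ (by simp : n ≤ (u ++ pref z n).length), pref_wcat_length, ← pref_wcat,
    take_pref _ (by omega)]

lemma mem_contAfter_reachObj_iff {z : ℕ → C} :
    z ∈ contAfter (ReachObj A) u ↔ ∃ k, contAfter (ReachObj A) (u ++ pref z k) = Set.univ := by
  constructor
  · rintro ⟨n, hn⟩
    exact ⟨n, contAfter_reachObj_eq_univ hn⟩
  · rintro ⟨k, hk⟩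
    exact (shift_mem_contAfter_append_pref k).1 (hk ▸ Set.mem_univ _)

end Reach

/-- A finite autonomous automaton: the words it outputs are exactly the ultimately periodic ones. -/
structure Lasso (C : Type) where
  S : Type
  [finite : Finite S]
  init : S
  step : S → S
  out : S → C

attribute [instance] Lasso.finite

namespace Lasso

def word (g : Lasso C) (n : ℕ) : C := g.out (g.step^[n] g.init)

def segmentStep {i j : ℕ} (hij : i < j) (k : Fin j) : Fin j :=
  if h : k.1 + 1 < j then ⟨k.1 + 1, h⟩ else ⟨i, hij⟩

/-- The lasso producing `x 0 ⋯ x (i - 1) (x i ⋯ x (j - 1))^ω`. -/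
def ofSegment (x : ℕ → C) {i j : ℕ} (hij : i < j) : Lasso C :=
  ⟨Fin j, ⟨0, by omega⟩, segmentStep hij, fun k => x k⟩

variable (x : ℕ → C) {i j : ℕ} (hij : i < j)

lemma ofSegment_word (n : ℕ) :
    (ofSegment x hij).word n = x ((segmentStep hij)^[n] ⟨0, by omega⟩) := rfl

lemma segmentStep_iterate_of_lt {n : ℕ} (hn : n < j) :
    ((segmentStep hij)^[n] ⟨0, by omega⟩).1 = n := by
  induction n with
  | zero => rfl
  | succ n ih =>
    have ih := ih (by omega)
    rw [Function.iterate_succ_apply', segmentStep, dif_pos (by omega)]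
    exact congrArg (· + 1) ih

lemma pref_ofSegment_word {n : ℕ} (hn : n ≤ j) : pref (ofSegment x hij).word n = pref x n :=
  List.ext_getElem (by simp) fun k hk _ => by
    rw [getElem_pref, getElem_pref, ofSegment_word,
      segmentStep_iterate_of_lt hij (by simp at hk; omega)]

lemma contAfter_append_pref_ofSegment {W : Set (ℕ → C)} {u : List C}
    (hcl : contAfter W (u ++ pref x j) = contAfter W (u ++ pref x i)) (k : ℕ) :
    contAfter W (u ++ pref (ofSegment x hij).word k) =
      contAfter W (u ++ pref x ((segmentStep hij)^[k] ⟨0, by omega⟩)) := by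
  induction k with
  | zero => rfl
  | succ k ih =>
    rw [pref_succ, ← List.append_assoc, contAfter_append_congr ih, List.append_assoc,
      Function.iterate_succ_apply', ofSegment_word]
    generalize (segmentStep hij)^[k] ⟨0, by omega⟩ = s
    rw [← pref_succ, segmentStep]
    split_ifs with h
    · rfl
    · rwa [show s.1 + 1 = j by omega]

end Lasso

section Regular

variable {W : Set (ℕ → C)}

lemma exists_lasso_pref_eq_of_finClasses (hreg : FinClasses W) (u : List C) (x : ℕ → C) (n₀ : ℕ) :
    ∃ g : Lasso C, pref g.word n₀ = pref x n₀ ∧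
      ∀ k, ∃ k', contAfter W (u ++ pref g.word k) = contAfter W (u ++ pref x k') := by
  obtain ⟨i, hi, j, hj, hne, hcl⟩ := (Set.Ici_infinite n₀).exists_ne_map_eq_of_mapsTo
    (f := fun k => contAfter W (u ++ pref x k)) (fun k _ => Set.mem_range_self _) hreg
  wlog hij : i < j generalizing i j
  · exact this j hj i hi hne.symm hcl.symm (by omega)
  refine ⟨Lasso.ofSegment x hij, Lasso.pref_ofSegment_word x hij ((Set.mem_Ici.1 hi).trans hij.le),
    fun k => ⟨_, Lasso.contAfter_append_pref_ofSegment x hij hcl.symm k⟩⟩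

lemma exists_lasso_reachObj {A : Set (List C)} (hreg : FinClasses (ReachObj A)) {a b : List C}
    {x : ℕ → C} (hxa : x ∈ contAfter (ReachObj A) a) (hxb : x ∉ contAfter (ReachObj A) b) :
    ∃ g : Lasso C, g.word ∈ contAfter (ReachObj A) a ∧ g.word ∉ contAfter (ReachObj A) b := by
  obtain ⟨k₀, hk₀⟩ := mem_contAfter_reachObj_iff.1 hxa
  obtain ⟨g, hpref, hclasses⟩ := exists_lasso_pref_eq_of_finClasses hreg b x k₀
  refine ⟨g, mem_contAfter_reachObj_iff.2 ⟨k₀, hpref ▸ hk₀⟩, fun hgb => hxb ?_⟩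
  obtain ⟨k, hk⟩ := mem_contAfter_reachObj_iff.1 hgb
  obtain ⟨k', hk'⟩ := hclasses k
  exact mem_contAfter_reachObj_iff.2 ⟨k', hk' ▸ hk⟩

theorem exists_lasso_separating (hform : ∃ A : Set (List C), W = ReachObj A ∨ W = SafeObj A)
    (hreg : FinClasses W) {a b : List C} {x : ℕ → C} (hxa : x ∈ contAfter W a)
    (hxb : x ∉ contAfter W b) : ∃ g : Lasso C, g.word ∈ contAfter W a ∧ g.word ∉ contAfter W b := by
  obtain ⟨A, rfl | rfl⟩ := hform
  · exact exists_lasso_reachObj hreg hxa hxb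
  · obtain ⟨g, hgb, hga⟩ :=
      exists_lasso_reachObj (by simpa [SafeObj] using hreg.compl) (not_not.1 hxb) hxa
    exact ⟨g, hga, not_not.2 hgb⟩

end Regular

namespace Arena

variable {A : Arena C}

lemma endFrom_append (v : A.V) (l : List (A.V × C × A.V)) (e : A.V × C × A.V) :
    A.endFrom v (l ++ [e]) = e.2.2 := by
  induction l generalizing v with
  | nil => rfl
  | cons e' l ih => exact ih e'.2.2

lemma histFrom_append (v : A.V) (l : List (A.V × C × A.V)) (e : A.V × C × A.V) :
    A.HistFrom v (l ++ [e]) ↔ A.HistFrom v l ∧ e ∈ A.E ∧ e.1 = A.endFrom v l := by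
  induction l generalizing v with
  | nil => simp [HistFrom, endFrom]
  | cons e' l ih => simp only [List.cons_append, HistFrom, endFrom, ih, and_assoc]

namespace PlayFrom

variable {v : A.V} {π : ℕ → A.V × C × A.V}

lemma endFrom_pref (hp : A.PlayFrom v π) (n : ℕ) : A.endFrom v (pref π n) = (π n).1 := by
  induction n with
  | zero => exact hp.1.symm
  | succ n ih => rw [pref_succ, endFrom_append, (hp.2 n).2]

lemma histFrom_pref (hp : A.PlayFrom v π) (n : ℕ) : A.HistFrom v (pref π n) := by
  induction n with
  | zero => trivial
  | succ n ih =>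
    rw [pref_succ]
    exact (histFrom_append _ _ _).2 ⟨ih, (hp.2 n).1, (hp.endFrom_pref n).symm⟩

lemma shift (hp : A.PlayFrom v π) (k : ℕ) : A.PlayFrom (π k).1 (fun n => π (k + n)) :=
  ⟨rfl, fun n => hp.2 (k + n)⟩

end PlayFrom

namespace Strategy

variable (σ : A.Strategy) (v : A.V)

def hist : ℕ → List (A.V × C × A.V)
  | 0 => []
  | n + 1 => hist n ++ [σ.next v (hist n)]

def play (n : ℕ) : A.V × C × A.V := σ.next v (σ.hist v n)

lemma pref_play (n : ℕ) : pref (σ.play v) n = σ.hist v n := by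
  induction n with
  | zero => rfl
  | succ n ih => rw [pref_succ, ih]; rfl

lemma histFrom_hist (hA : A.OneP1) (n : ℕ) : A.HistFrom v (σ.hist v n) := by
  induction n with
  | zero => trivial
  | succ n ih => exact (histFrom_append _ _ _).2 ⟨ih, σ.legal v _ ih (hA _)⟩

lemma playFrom_play (hA : A.OneP1) : A.PlayFrom v (σ.play v) := by
  refine ⟨(σ.legal v [] trivial (hA _)).2,
    fun n => ⟨(σ.legal v _ (σ.histFrom_hist v hA n) (hA _)).1, ?_⟩⟩
  change _ = (σ.next v (σ.hist v (n + 1))).1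
  rw [(σ.legal v _ (σ.histFrom_hist v hA (n + 1)) (hA _)).2, hist, endFrom_append]
  rfl

lemma consistent_play : σ.Consistent v (σ.play v) := fun n _ => by
  change σ.play v n = σ.next v (pref (σ.play v) n)
  rw [pref_play]
  rfl

lemma BasedOn.exists_play_eq {σ : A.Strategy} (hA : A.OneP1) {N : MemStruct C}
    (hσ : σ.BasedOn N) :
    ∃ nxt : A.V → N.M → A.V × C × A.V, ∀ v n,
      σ.play v n = nxt (σ.play v n).1 (N.updStar N.init (pref (playCol (σ.play v)) n)) := by
  obtain ⟨nxt, hnxt⟩ := hσ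
  refine ⟨nxt, fun v n => ?_⟩
  have hp := σ.playFrom_play v hA
  calc σ.play v n = σ.next v (pref (σ.play v) n) := by rw [pref_play]; rfl
    _ = _ := by
      rw [hnxt v _ (hp.histFrom_pref n) (hA _), hp.endFrom_pref, map_pref]
      rfl

def positional (c : A.V → A.V × C × A.V) (hc : ∀ u, c u ∈ A.E ∧ (c u).1 = u) : A.Strategy :=
  ⟨fun v l => c (A.endFrom v l), fun _ _ _ _ => hc _⟩

lemma Consistent.eq_positional (hA : A.OneP1) {c : A.V → A.V × C × A.V}
    {hc : ∀ u, c u ∈ A.E ∧ (c u).1 = u} {π : ℕ → A.V × C × A.V}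
    (hcons : (positional c hc).Consistent v π) (hp : A.PlayFrom v π) (n : ℕ) :
    π n = c (π n).1 :=
  calc π n = c (A.endFrom v (pref π n)) := hcons n (hA _)
    _ = c (π n).1 := by rw [hp.endFrom_pref]

end Strategy

end Arena

namespace Gadget

variable (w : Bool → List C) (g : Bool → Lasso C)

abbrev Inner : Type := (Σ b, Fin (w b).length) ⊕ (Σ b, (g b).S)

abbrev Vertex : Type := Option (Inner w g)

def chainAt (b : Bool) (n : ℕ) : Vertex w g :=
  if h : n < (w b).length then some (.inl ⟨b, n, h⟩) else none

def loopAt (b : Bool) (s : (g b).S) : Vertex w g := some (.inr ⟨b, s⟩)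

def move : Inner w g → C × Vertex w g
  | .inl ⟨b, i⟩ => ((w b)[i], chainAt w g b (i + 1))
  | .inr ⟨b, s⟩ => ((g b).out s, loopAt w g b ((g b).step s))

def hubEdge (b : Bool) : Vertex w g × C × Vertex w g :=
  (none, (g b).out (g b).init, loopAt w g b ((g b).step (g b).init))

/-- Two chains reading `w false` and `w true` merge in the hub `none`, where Player 1 chooses
which of the two lassos to enter; every other vertex has a single outgoing edge. -/
abbrev arena : Arena C where
  V := Vertex w g
  P1 _ := True
  E := Set.range (fun u => (some u, move w g u)) ∪ Set.range (hubEdge w g)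
  succ v _ := match v with
    | none => ⟨hubEdge w g true, Or.inr ⟨true, rfl⟩, rfl⟩
    | some u => ⟨(some u, move w g u), Or.inl ⟨u, rfl⟩, rfl⟩

lemma arena_isFinite_oneP1 : (arena w g).IsFinite ∧ (arena w g).OneP1 :=
  ⟨⟨inferInstanceAs (Finite (Vertex w g)), (Set.finite_range _).union (Set.finite_range _)⟩,
    fun _ => trivial⟩

def choice (b : Bool) : Vertex w g → Vertex w g × C × Vertex w g
  | none => hubEdge w g b
  | some u => (some u, move w g u)

lemma choice_mem (b : Bool) (v : Vertex w g) :
    choice w g b v ∈ (arena w g).E ∧ (choice w g b v).1 = v := by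
  cases v with
  | none => exact ⟨Or.inr ⟨b, rfl⟩, rfl⟩
  | some u => exact ⟨Or.inl ⟨u, rfl⟩, rfl⟩

variable {w g} {b : Bool} {v : Vertex w g} {π : ℕ → Vertex w g × C × Vertex w g}

lemma chainAt_length : chainAt w g b (w b).length = none := dif_neg (lt_irrefl _)

lemma eq_move_of_mem {e : Vertex w g × C × Vertex w g} (he : e ∈ (arena w g).E) {u : Inner w g}
    (hu : e.1 = some u) : e = (some u, move w g u) := by
  rcases he with ⟨u', rfl⟩ | ⟨b, rfl⟩
  · obtain rfl := Option.some_injective _ hu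
    rfl
  · cases hu

lemma exists_hubEdge_of_mem {e : Vertex w g × C × Vertex w g} (he : e ∈ (arena w g).E)
    (hnone : e.1 = none) : ∃ b, e = hubEdge w g b := by
  rcases he with ⟨u, rfl⟩ | ⟨b, rfl⟩
  · cases hnone
  · exact ⟨b, rfl⟩

lemma play_chain (hp : (arena w g).PlayFrom (chainAt w g b 0) π) :
    ∀ n ≤ (w b).length, (π n).1 = chainAt w g b n := by
  intro n
  induction n with
  | zero => exact fun _ => hp.1
  | succ n ih =>
    intro hn
    have hv : (π n).1 = some (.inl ⟨b, n, by omega⟩) := by rw [ih (by omega), chainAt, dif_pos]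
    rw [← (hp.2 n).2, eq_move_of_mem (hp.2 n).1 hv]
    rfl

lemma pref_playCol_chain (hp : (arena w g).PlayFrom (chainAt w g b 0) π) :
    pref (Arena.playCol π) (w b).length = w b := by
  refine List.ext_getElem (by simp) fun n hn _ => ?_
  have hn : n < (w b).length := by simpa using hn
  have hv : (π n).1 = some (.inl ⟨b, n, hn⟩) := by rw [play_chain hp n hn.le, chainAt, dif_pos]
  rw [getElem_pref, Arena.playCol, eq_move_of_mem (hp.2 n).1 hv]
  rfl

lemma playCol_of_hubEdge (hp : (arena w g).PlayFrom v π) (h0 : π 0 = hubEdge w g b) :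
    Arena.playCol π = (g b).word := by
  have hloop : ∀ n, (π (n + 1)).1 = loopAt w g b ((g b).step^[n + 1] (g b).init) := by
    intro n
    induction n with
    | zero => rw [← (hp.2 0).2, h0]; rfl
    | succ n ih =>
      rw [← (hp.2 (n + 1)).2, eq_move_of_mem (hp.2 (n + 1)).1 ih,
        Function.iterate_succ_apply' _ (n + 1)]
      rfl
  funext n
  cases n with
  | zero => rw [Arena.playCol, h0]; rfl
  | succ n => rw [Arena.playCol, eq_move_of_mem (hp.2 (n + 1)).1 (hloop n)]; rfl

lemma playCol_eq_wcat (hp : (arena w g).PlayFrom (chainAt w g b 0) π) {b' : Bool}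
    (hhub : π (w b).length = hubEdge w g b') : Arena.playCol π = wcat (w b) (g b').word := by
  rw [← wcat_pref_shift (Arena.playCol π) (w b).length, pref_playCol_chain hp]
  exact congrArg _ (playCol_of_hubEdge (hp.shift _) hhub)

lemma winningFrom_choice {W : Set (ℕ → C)} (hwin : (g b).word ∈ contAfter W (w b)) :
    (Arena.Strategy.positional (A := arena w g) (choice w g b) (choice_mem w g b)).WinningFrom W
      (chainAt w g b 0) := by
  intro π hp hcons
  have hhub : π (w b).length = hubEdge w g b := by
    rw [hcons.eq_positional _ (arena_isFinite_oneP1 w g).2 hp, play_chain hp _ le_rfl,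
      chainAt_length]
    rfl
  rw [playCol_eq_wcat hp hhub]
  exact hwin

end Gadget

open Gadget in
/-- Since the memory does not distinguish `w false` from `w true`, the strategy takes the same
edge at the hub of the gadget after either word. -/
theorem exists_common_continuation {W : Set (ℕ → C)} {N : MemStruct C}
    (hsuff : SufficesIn N W fun A => A.IsFinite ∧ A.OneP1) (w : Bool → List C)
    (g : Bool → Lasso C) (hmem : N.updStar N.init (w false) = N.updStar N.init (w true))
    (hwin : ∀ b, (g b).word ∈ contAfter W (w b)) :
    ∃ b', ∀ b, (g b').word ∈ contAfter W (w b) := by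
  obtain ⟨σ, hσ, hopt⟩ := hsuff _ (arena_isFinite_oneP1 w g)
  have hA := (arena_isFinite_oneP1 w g).2
  obtain ⟨nxt, hnxt⟩ := hσ.exists_play_eq hA
  have hplay b := σ.playFrom_play (chainAt w g b 0) hA
  have hhub b : σ.play (chainAt w g b 0) (w b).length = nxt none (N.updStar N.init (w b)) := by
    rw [hnxt, play_chain (hplay b) _ le_rfl, chainAt_length, pref_playCol_chain (hplay b)]
  obtain ⟨b', hb'⟩ := exists_hubEdge_of_mem ((hplay true).2 _).1
    (by rw [play_chain (hplay true) _ le_rfl, chainAt_length])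
  refine ⟨b', fun b => ?_⟩
  have hsame : σ.play (chainAt w g b 0) (w b).length = hubEdge w g b' := by
    rw [← hb', hhub, hhub]
    cases b
    · rw [hmem]
    · rfl
  have hwinb := hopt _ ⟨_, winningFrom_choice (hwin b)⟩ _ (hplay b) (σ.consistent_play _)
  rwa [playCol_eq_wcat (hplay b) hsame] at hwinb

end

theorem strongMonotony_necessary_regular_general {C : Type}
    (W : Set (ℕ → C))
    (hform : ∃ A : Set (List C), W = ReachObj A ∨ W = SafeObj A)
    (hreg : FinClasses W)
    (N : MemStruct C)
    (hsuff : SufficesIn N W (fun A => A.IsFinite ∧ A.OneP1)) :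
    StronglyMonotone N W := by
  intro w₁ w₂ hmem
  by_contra hcomp
  obtain ⟨h₁₂, h₂₁⟩ := not_or.1 hcomp
  obtain ⟨x₁, hx₁, hx₁'⟩ := Set.not_subset.1 h₁₂
  obtain ⟨x₂, hx₂, hx₂'⟩ := Set.not_subset.1 h₂₁
  obtain ⟨g₁, hg₁, hg₁'⟩ := exists_lasso_separating hform hreg hx₁ hx₁'
  obtain ⟨g₂, hg₂, hg₂'⟩ := exists_lasso_separating hform hreg hx₂ hx₂'
  obtain ⟨b', hb'⟩ := exists_common_continuation hsuff (fun b => cond b w₂ w₁)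
    (fun b => cond b g₂ g₁) hmem (by rintro (_ | _) <;> assumption)
  cases b'
  · exact hg₁' (hb' true)
  · exact hg₂' (hb' false)

/-- for a regular reachability or safety objective `W`, if the memory
structure `N` suffices to play optimally for `W` in all finite one-player arenas of
Player 1, then `W` is `N`-strongly-monotone. -/
theorem strongMonotony_necessary_regular {C : Type} [Nonempty C]
    (W : Set (ℕ → C))
    (hform : ∃ A : Set (List C), W = ReachObj A ∨ W = SafeObj A)
    (hreg : FinClasses W)
    (N : MemStruct C)
    (hsuff : SufficesIn N W (fun A => A.IsFinite ∧ A.OneP1)) :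
    StronglyMonotone N W :=
  strongMonotony_necessary_regular_general W hform hreg N hsuff

end RegularMemory
end

section
/- Let W ⊆ C^ω be an objective whose prefix preorder ⪯_W is not well-founded, i.e., there exists an infinite sequence of finite words w₁ ≻_W w₂ ≻_W w₃ ≻_W ⋯ that is strictly decreasing for ⪯_W. Then no memory structure with finitely many states suffices to play optimally for W in all arenas: for every finite memory structure M there is an arena A in which Player 1 has a winning strategy from some vertex but no optimal strategy based on M. -/
set_option autoImplicit false

/-!
Pick `x l ∈ (f l)⁻¹W \ (f (l+1))⁻¹W`. In the arena built from `x`, a Player-2 chain reading a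
word `w` leads to a single Player-1 vertex `u`, from which Player 1 picks a lane reading some
`x l`. From the start of the chain for `f k`, choosing lane `k` wins. A strategy with finite
memory reaches `u` in the same memory state after infinitely many of the words `f k`, so it
commits to a single lane `ℓ` for all of them; for such `k > ℓ` the play `f k · x ℓ` loses,
because `f k ⪯_W f (ℓ+1)`.
-/

namespace RegularMemory

section Words

variable {C : Type}

@[simp]
theorem wcat_nil (y : ℕ → C) : wcat [] y = y := by
  funext n
  simp [wcat]

@[simp]
theorem wcat_cons_succ (a : C) (w : List C) (y : ℕ → C) (n : ℕ) :
    wcat (a :: w) y (n + 1) = wcat w y n := by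
  simp [wcat]

@[simp]
theorem ofFn_wcat (w : List C) (y : ℕ → C) :
    List.ofFn (fun i : Fin w.length => wcat w y i) = w := by
  simp [wcat]

end Words

namespace Arena

variable {C : Type}

def playOf {V : Type} (s : V → V × C × V) (v : V) (n : ℕ) : V × C × V :=
  s ((fun u => (s u).2.2)^[n] v)

variable {A : Arena C}

theorem PlayFrom.tail {v : A.V} {π : ℕ → A.V × C × A.V} (hπ : A.PlayFrom v π) :
    A.PlayFrom (π 0).2.2 fun n => π (n + 1) :=
  ⟨(hπ.2 0).2.symm, fun n => hπ.2 (n + 1)⟩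

theorem endFrom_ofFn {v : A.V} {π : ℕ → A.V × C × A.V} (hπ : A.PlayFrom v π) (n : ℕ) :
    A.endFrom v (List.ofFn fun i : Fin n => π i) = (π n).1 := by
  induction n generalizing v π with
  | zero => exact hπ.1.symm
  | succ n ih =>
    rw [List.ofFn_succ]
    exact ih hπ.tail

theorem histFrom_ofFn {v : A.V} {π : ℕ → A.V × C × A.V} (hπ : A.PlayFrom v π) (n : ℕ) :
    A.HistFrom v (List.ofFn fun i : Fin n => π i) := by
  induction n generalizing v π with
  | zero => trivial
  | succ n ih =>
    rw [List.ofFn_succ]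
    exact ⟨(hπ.2 0).1, hπ.1, ih hπ.tail⟩

theorem playFrom_playOf {s : A.V → A.V × C × A.V} (hs : ∀ v, s v ∈ A.E ∧ (s v).1 = v)
    (v : A.V) : A.PlayFrom v (playOf s v) := by
  refine ⟨(hs v).2, fun n => ⟨(hs _).1, ?_⟩⟩
  rw [playOf, playOf, (hs _).2, Function.iterate_succ_apply']

theorem eq_playOf_of_playFrom {s : A.V → A.V × C × A.V} {v : A.V} {π : ℕ → A.V × C × A.V}
    (hπ : A.PlayFrom v π) (hs : ∀ n, π n = s (π n).1) : π = playOf s v := by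
  have hvert : ∀ n, (π n).1 = (fun u => (s u).2.2)^[n] v := by
    intro n
    induction n with
    | zero => exact hπ.1
    | succ n ih => rw [← (hπ.2 n).2, hs n, ih, Function.iterate_succ_apply']
  funext n
  rw [hs n, hvert n, playOf]

theorem Strategy.BasedOn.next_eq {σ : A.Strategy} {N : MemStruct C} (hσ : σ.BasedOn N)
    {v v' : A.V} {l l' : List (A.V × C × A.V)} (hl : A.HistFrom v l) (hl' : A.HistFrom v' l')
    (hP1 : A.P1 (A.endFrom v l)) (hend : A.endFrom v l = A.endFrom v' l')
    (hmem : N.updStar N.init (l.map fun e => e.2.1) = N.updStar N.init (l'.map fun e => e.2.1)) :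
    σ.next v l = σ.next v' l' := by
  obtain ⟨nxt, hnxt⟩ := hσ
  rw [hnxt v l hl hP1, hnxt v' l' hl' (hend ▸ hP1), hend, hmem]

end Arena

section LaneArena

variable {C : Type} (x : ℕ → ℕ → C)

/-- The edge taken from each vertex when Player 1 picks lane `l` at `Sum.inl []`: the vertex
`Sum.inl w` still has to read `w`, and `Sum.inr y` reads the infinite word `y`. -/
def laneStep (l : ℕ) : List C ⊕ (ℕ → C) → (List C ⊕ (ℕ → C)) × C × (List C ⊕ (ℕ → C))
  | .inl [] => (.inl [], x l 0, .inr fun n => x l (n + 1))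
  | .inl (a :: w) => (.inl (a :: w), a, .inl w)
  | .inr y => (.inr y, y 0, .inr fun n => y (n + 1))

@[simp]
theorem laneStep_fst (l : ℕ) (v : List C ⊕ (ℕ → C)) : (laneStep x l v).1 = v := by
  rcases v with (_ | _) | _ <;> rfl

theorem laneStep_of_ne {v : List C ⊕ (ℕ → C)} (hv : v ≠ .inl []) (l l' : ℕ) :
    laneStep x l v = laneStep x l' v := by
  rcases v with (_ | _) | _
  · exact absurd rfl hv
  all_goals rfl

abbrev laneArena : Arena C where
  V := List C ⊕ (ℕ → C)
  P1 v := v = .inl []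
  E := {e | ∃ l, laneStep x l e.1 = e}
  succ v _ := ⟨laneStep x 0 v, ⟨0, by rw [laneStep_fst]⟩, laneStep_fst x 0 v⟩

def lanePlay (l : ℕ) (v : List C ⊕ (ℕ → C)) : ℕ → (List C ⊕ (ℕ → C)) × C × (List C ⊕ (ℕ → C)) :=
  Arena.playOf (laneStep x l) v

@[simp]
theorem lanePlay_zero (l : ℕ) (v : List C ⊕ (ℕ → C)) : lanePlay x l v 0 = laneStep x l v :=
  rfl

@[simp]
theorem lanePlay_succ (l : ℕ) (v : List C ⊕ (ℕ → C)) (n : ℕ) :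
    lanePlay x l v (n + 1) = lanePlay x l (laneStep x l v).2.2 n :=
  rfl

theorem lanePlay_eq_laneStep (l : ℕ) (v : List C ⊕ (ℕ → C)) (n : ℕ) :
    lanePlay x l v n = laneStep x l (lanePlay x l v n).1 := by
  simp only [lanePlay, Arena.playOf, laneStep_fst]

theorem lanePlay_playFrom (l : ℕ) (v : List C ⊕ (ℕ → C)) :
    (laneArena x).PlayFrom v (lanePlay x l v) :=
  Arena.playFrom_playOf (A := laneArena x)
    (fun u => ⟨⟨l, congrArg _ (laneStep_fst x l u)⟩, laneStep_fst x l u⟩) v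

theorem lanePlay_inr_fst_ne (l : ℕ) (y : ℕ → C) (n : ℕ) :
    (lanePlay x l (.inr y) n).1 ≠ .inl [] := by
  induction n generalizing y with
  | zero => simp
  | succ n ih => exact ih _

theorem lanePlay_inl_fst_eq_nil_iff (l : ℕ) (w : List C) (n : ℕ) :
    (lanePlay x l (.inl w) n).1 = .inl [] ↔ n = w.length := by
  induction w generalizing n with
  | nil =>
    cases n with
    | zero => simp
    | succ n => simpa [laneStep] using lanePlay_inr_fst_ne x l _ n
  | cons a w ih =>
    cases n with
    | zero => simp
    | succ n => simpa [laneStep] using ih n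

theorem playCol_lanePlay_inr (l : ℕ) (y : ℕ → C) : Arena.playCol (lanePlay x l (.inr y)) = y := by
  funext n
  induction n generalizing y with
  | zero => rfl
  | succ n ih => exact ih _

theorem playCol_lanePlay_inl (l : ℕ) (w : List C) :
    Arena.playCol (lanePlay x l (.inl w)) = wcat w (x l) := by
  funext n
  induction w generalizing n with
  | nil =>
    cases n with
    | zero => rfl
    | succ n => simpa [Arena.playCol, laneStep] using congrFun (playCol_lanePlay_inr x l _) n
  | cons a w ih =>
    cases n with
    | zero => rfl
    | succ n => simpa [Arena.playCol, laneStep] using ih n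

theorem eq_lanePlay {l : ℕ} {v : List C ⊕ (ℕ → C)} {π : ℕ → (laneArena x).V × C × (laneArena x).V}
    (hπ : (laneArena x).PlayFrom v π) (hu : ∀ n, (π n).1 = .inl [] → π n = laneStep x l (.inl [])) :
    π = lanePlay x l v := by
  refine Arena.eq_playOf_of_playFrom hπ fun n => ?_
  by_cases h : (π n).1 = .inl []
  · rw [h]
    exact hu n h
  · obtain ⟨l', hl'⟩ := (hπ.2 n).1
    rw [laneStep_of_ne x h l l']
    exact hl'.symm

def laneStrategy (k : ℕ) : (laneArena x).Strategy where
  next _ _ := laneStep x k (.inl [])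
  legal _ _ _ hP1 := ⟨⟨k, rfl⟩, hP1.symm⟩

theorem laneStrategy_winningFrom {W : Set (ℕ → C)} {k : ℕ} {w : List C}
    (hx : x k ∈ contAfter W w) : (laneStrategy x k).WinningFrom W (.inl w) := by
  intro π hπ hcons
  have hπk : π = lanePlay x k (.inl w) :=
    eq_lanePlay x hπ fun n hn => hcons n (by rw [Arena.endFrom_ofFn hπ]; exact hn)
  rw [hπk, playCol_lanePlay_inl]
  exact hx

def laneHist (l : ℕ) (w : List C) : List ((laneArena x).V × C × (laneArena x).V) :=
  List.ofFn fun i : Fin w.length => lanePlay x l (.inl w) i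

theorem laneHist_histFrom (l : ℕ) (w : List C) : (laneArena x).HistFrom (.inl w) (laneHist x l w) :=
  Arena.histFrom_ofFn (lanePlay_playFrom x l _) _

theorem laneHist_endFrom (l : ℕ) (w : List C) :
    (laneArena x).endFrom (.inl w) (laneHist x l w) = .inl [] := by
  rw [laneHist, Arena.endFrom_ofFn (lanePlay_playFrom x l _), lanePlay_inl_fst_eq_nil_iff]

theorem laneHist_map_col (l : ℕ) (w : List C) : (laneHist x l w).map (fun e => e.2.1) = w := by
  rw [laneHist, List.map_ofFn]
  conv_rhs => rw [← ofFn_wcat w (x l), ← playCol_lanePlay_inl x l w]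
  rfl

theorem consistent_lanePlay {σ : (laneArena x).Strategy} {l : ℕ} {w : List C}
    (hσ : σ.next (.inl w) (laneHist x l w) = laneStep x l (.inl [])) :
    σ.Consistent (.inl w) (lanePlay x l (.inl w)) := by
  intro n hn
  rw [Arena.endFrom_ofFn (lanePlay_playFrom x l _)] at hn
  obtain rfl := (lanePlay_inl_fst_eq_nil_iff x l w n).mp hn
  rw [lanePlay_eq_laneStep, hn]
  exact hσ.symm

theorem exists_lane_of_basedOn {σ : (laneArena x).Strategy} {N : MemStruct C}
    (hσ : σ.BasedOn N) (W : Set (ℕ → C)) (m : N.M) :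
    ∃ ℓ, ∀ w, N.updStar N.init w = m → σ.WinningFrom W (.inl w) → x ℓ ∈ contAfter W w := by
  by_cases hm : ∃ w₀, N.updStar N.init w₀ = m
  swap
  · exact ⟨0, fun w hw => absurd ⟨w, hw⟩ hm⟩
  obtain ⟨w₀, rfl⟩ := hm
  obtain ⟨⟨ℓ, hℓ⟩, hsrc⟩ := σ.legal _ _ (laneHist_histFrom x 0 w₀) (laneHist_endFrom x 0 w₀)
  refine ⟨ℓ, fun w hw hwin => ?_⟩
  have hchoice : σ.next (.inl w) (laneHist x ℓ w) = laneStep x ℓ (.inl []) := by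
    rw [hσ.next_eq (laneHist_histFrom x ℓ w) (laneHist_histFrom x 0 w₀) (laneHist_endFrom x ℓ w)
      (by rw [laneHist_endFrom, laneHist_endFrom]) (by rw [laneHist_map_col, laneHist_map_col, hw]),
      ← hℓ, hsrc, laneHist_endFrom]
  have hmem := hwin _ (lanePlay_playFrom x ℓ _) (consistent_lanePlay x hchoice)
  rwa [playCol_lanePlay_inl] at hmem

end LaneArena

theorem no_finite_memory_of_not_wellFounded_general {C : Type}
    (W : Set (ℕ → C))
    (f : ℕ → List C)
    (hdec : ∀ i : ℕ, prefLt W (f (i + 1)) (f i)) :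
    ∀ N : MemStruct C, Finite N.M →
      ∃ A : Arena C,
        (∃ v : A.V, ∃ σ : A.Strategy, σ.WinningFrom W v) ∧
        ¬ ∃ σ : A.Strategy, σ.BasedOn N ∧ σ.Optimal W := by
  intro N hN
  choose x hx hx' using fun l => Set.not_subset.mp (hdec l).2
  refine ⟨laneArena x, ⟨.inl (f 0), _, laneStrategy_winningFrom x (hx 0)⟩, ?_⟩
  rintro ⟨σ, hσ, hopt⟩
  obtain ⟨m, hm⟩ := Finite.exists_infinite_fiber fun k => N.updStar N.init (f k)
  obtain ⟨ℓ, hℓ⟩ := exists_lane_of_basedOn x hσ W m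
  obtain ⟨k, hk, hℓk⟩ := (Set.infinite_coe_iff.mp hm).exists_gt ℓ
  have hwin := hopt _ ⟨_, laneStrategy_winningFrom x (hx k)⟩
  have hanti : Antitone fun i => contAfter W (f i) := antitone_nat_of_succ_le fun i => (hdec i).1
  exact hx' ℓ (hanti hℓk (hℓ (f k) hk hwin))

/-- if the prefix preorder of `W` is not well-founded (there is an
infinite strictly decreasing sequence of finite words), then no finite memory
structure suffices to play optimally for `W` in all arenas. -/
theorem no_finite_memory_of_not_wellFounded {C : Type} [Nonempty C]
    (W : Set (ℕ → C))
    (f : ℕ → List C)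
    (hdec : ∀ i : ℕ, prefLt W (f (i + 1)) (f i)) :
    ∀ N : MemStruct C, Finite N.M →
      ∃ A : Arena C,
        (∃ v : A.V, ∃ σ : A.Strategy, σ.WinningFrom W v) ∧
        ¬ ∃ σ : A.Strategy, σ.BasedOn N ∧ σ.Optimal W :=
  no_finite_memory_of_not_wellFounded_general W f hdec

end RegularMemory
end
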